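/- arXiv:1805.09920 — 4 statements merged into one kernel-verified Lean document; each statement's English description precedes it below -/
import Mathlib

section
/- Let φ = (φ_1, φ_2, φ_3) : ℝ³ → ℝ³ be differentiable at a point x ∈ ℝ³ and let n ∈ ℝ³ be a nonzero vector. If for each i = 1, 2, 3 the derivative of φ_i at x vanishes in every direction t ∈ ℝ³ orthogonal to n (i.e., Dφ_i(x)[t] = 0 whenever t·n = 0), then (curl φ)(x) · n = 0, where curl φ = (∂_2 φ_3 − ∂_3 φ_2, ∂_3 φ_1 − ∂_1 φ_3, ∂_1 φ_2 − ∂_2 φ_1). -/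
/-- Partial derivative `∂ₖ f(x)` of a scalar function on `ℝ³`. -/
noncomputable def pd3 (f : (Fin 3 → ℝ) → ℝ) (x : Fin 3 → ℝ) (k : Fin 3) : ℝ :=
  fderiv ℝ f x (Pi.single k 1)

/-- If `φ : ℝ³ → ℝ³` is differentiable at `x`, `n ≠ 0`, and the derivative of
each component `φᵢ` at `x` vanishes in every direction orthogonal to `n`, then
`(curl φ)(x) · n = 0`, where
`curl φ = (∂₂ φ₃ − ∂₃ φ₂, ∂₃ φ₁ − ∂₁ φ₃, ∂₁ φ₂ − ∂₂ φ₁)`. -/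
theorem curl_dot_normal_eq_zero_3D
    (φ : (Fin 3 → ℝ) → (Fin 3 → ℝ)) (x n : Fin 3 → ℝ)
    (hφ : DifferentiableAt ℝ φ x) (hn : n ≠ 0)
    (ht : ∀ (i : Fin 3) (t : Fin 3 → ℝ), t 0 * n 0 + t 1 * n 1 + t 2 * n 2 = 0 →
      fderiv ℝ (fun y => φ y i) x t = 0) :
    (pd3 (fun y => φ y 2) x 1 - pd3 (fun y => φ y 1) x 2) * n 0 +
      (pd3 (fun y => φ y 0) x 2 - pd3 (fun y => φ y 2) x 0) * n 1 +
      (pd3 (fun y => φ y 1) x 0 - pd3 (fun y => φ y 0) x 1) * n 2 = 0 := by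
  have key : ∀ (i : Fin 3) (a b c : ℝ), a * n 0 + b * n 1 + c * n 2 = 0 →
      a * pd3 (fun y => φ y i) x 0 + b * pd3 (fun y => φ y i) x 1 +
        c * pd3 (fun y => φ y i) x 2 = 0 := by
    intro i a b c habc
    set L := fderiv ℝ (fun y => φ y i) x with hL
    set t : Fin 3 → ℝ :=
      a • (Pi.single 0 1 : Fin 3 → ℝ) + b • (Pi.single 1 1 : Fin 3 → ℝ) +
        c • (Pi.single 2 1 : Fin 3 → ℝ) with htdef
    have ht0 : t 0 = a := by simp [htdef, Pi.single_apply]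
    have ht1 : t 1 = b := by simp [htdef, Pi.single_apply]
    have ht2 : t 2 = c := by simp [htdef, Pi.single_apply]
    have horth : t 0 * n 0 + t 1 * n 1 + t 2 * n 2 = 0 := by
      rw [ht0, ht1, ht2]; exact habc
    have h0 : L t = 0 := ht i t horth
    have hlin : L t = a * L (Pi.single 0 1 : Fin 3 → ℝ) + b * L (Pi.single 1 1 : Fin 3 → ℝ) +
        c * L (Pi.single 2 1 : Fin 3 → ℝ) := by
      rw [htdef]
      simp [L.map_add, L.map_smul, smul_eq_mul]
    simp only [pd3, ← hL]
    rw [← hlin, h0]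
  have h1 := key 0 0 (n 2) (-(n 1)) (by ring)
  have h2 := key 1 (n 2) 0 (-(n 0)) (by ring)
  have h3 := key 2 (n 1) (-(n 0)) 0 (by ring)
  linear_combination h2 - h1 - h3
end

section
/- Let Q be a real normed space, W a real inner product space, and b : Q × W → ℝ a bilinear map such that |b(q, w)| ≤ C_b ‖q‖ ‖w‖ for all q ∈ Q, w ∈ W, for some constant C_b > 0. Let P : W → W be a linear map satisfying ⟨Pw, w − Pw⟩ = 0 for all w ∈ W. Let C₁, C₂ > 0 and assume: (H1) for every w ∈ W there exists q ∈ Q with b(q, w) = b(q, w − Pw), b(q, w − Pw) ≥ C₁ ‖w − Pw‖², and ‖q‖ ≤ ‖w − Pw‖; (H2) for every w ∈ W there exists g ∈ Q with b(g, Pw) = ‖Pw‖² and ‖g‖ ≤ C₂ ‖Pw‖. Then for every w ∈ W there exists z ∈ Q with b(z, w) ≥ (C₁/(1 + C_b² C₂²)) ‖w‖² and ‖z‖ ≤ (1 + 2C₁C₂/(1 + C_b² C₂²)) ‖w‖. In particular b satisfies an inf-sup condition with a constant depending only on C₁, C₂, C_b. -/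
open RealInnerProductSpace

/-!
Split `w = Pw + (w - Pw)`, which is orthogonal, so `‖w‖² = ‖Pw‖² + ‖w - Pw‖²`. The element `q` of
(H1) controls the component `w - Pw` and the element `g` of (H2) controls `Pw`, at the price of a
cross term `b(g, w - Pw) ≥ -C_b C₂ ‖Pw‖ ‖w - Pw‖`. For `z = q + 2βg` with
`β (1 + C_b² C₂²) ≤ C₁` this cross term is absorbed by completing the square:
`b(z, w) - β‖w‖² ≥ β (‖Pw‖ - C_b C₂ ‖w - Pw‖)² ≥ 0`.
-/

section OrthogonalSplitting

variable {W : Type*} [NormedAddCommGroup W] [InnerProductSpace ℝ W] {u w : W}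

theorem norm_sq_eq_add_of_inner_sub_eq_zero (h : ⟪u, w - u⟫ = 0) :
    ‖w‖ ^ 2 = ‖u‖ ^ 2 + ‖w - u‖ ^ 2 := by
  simpa [h] using norm_add_sq_real u (w - u)

theorem norm_le_of_inner_sub_eq_zero (h : ⟪u, w - u⟫ = 0) : ‖u‖ ≤ ‖w‖ :=
  (sq_le_sq₀ (norm_nonneg _) (norm_nonneg _)).mp <| by
    rw [norm_sq_eq_add_of_inner_sub_eq_zero h]; exact le_add_of_nonneg_right (sq_nonneg _)

theorem norm_sub_le_of_inner_sub_eq_zero (h : ⟪u, w - u⟫ = 0) : ‖w - u‖ ≤ ‖w‖ :=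
  (sq_le_sq₀ (norm_nonneg _) (norm_nonneg _)).mp <| by
    rw [norm_sq_eq_add_of_inner_sub_eq_zero h]; exact le_add_of_nonneg_left (sq_nonneg _)

end OrthogonalSplitting

section Macroelement

variable {Q W : Type*} [NormedAddCommGroup Q] [NormedSpace ℝ Q]
  [NormedAddCommGroup W] [InnerProductSpace ℝ W]
  {b : Q →ₗ[ℝ] W →ₗ[ℝ] ℝ} {Cb C₁ C₂ β : ℝ} {u w : W} {q g : Q}

theorem le_apply_add_smul_of_macroelement (hCb : 0 ≤ Cb)
    (hb : ∀ (q : Q) (w : W), |b q w| ≤ Cb * ‖q‖ * ‖w‖)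
    (hβ : 0 ≤ β) (hβC₁ : β * (1 + Cb ^ 2 * C₂ ^ 2) ≤ C₁) (hu : ⟪u, w - u⟫ = 0)
    (hqw : b q w = b q (w - u)) (hq : C₁ * ‖w - u‖ ^ 2 ≤ b q (w - u))
    (hgu : b g u = ‖u‖ ^ 2) (hg : ‖g‖ ≤ C₂ * ‖u‖) :
    β * ‖w‖ ^ 2 ≤ b (q + (2 * β) • g) w := by
  set a := ‖u‖
  set c := ‖w - u‖
  have hcross : -(Cb * C₂ * a * c) ≤ b g (w - u) := by
    refine neg_le_of_abs_le ((hb g (w - u)).trans ?_)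
    calc Cb * ‖g‖ * c ≤ Cb * (C₂ * a) * c := by gcongr
      _ = Cb * C₂ * a * c := by ring
  have hsplit : b g w = b g u + b g (w - u) := by
    rw [← map_add, add_sub_cancel]
  have hq' : β * (1 + Cb ^ 2 * C₂ ^ 2) * c ^ 2 ≤ b q (w - u) :=
    (mul_le_mul_of_nonneg_right hβC₁ (sq_nonneg c)).trans hq
  calc β * ‖w‖ ^ 2
      = β * (1 + Cb ^ 2 * C₂ ^ 2) * c ^ 2 + 2 * β * (a ^ 2 - Cb * C₂ * a * c)
          - β * (a - Cb * C₂ * c) ^ 2 := by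
        rw [norm_sq_eq_add_of_inner_sub_eq_zero hu]; ring
    _ ≤ b q (w - u) + 2 * β * (a ^ 2 + b g (w - u)) := by
        have := mul_le_mul_of_nonneg_left hcross (mul_nonneg zero_le_two hβ)
        linarith [mul_nonneg hβ (sq_nonneg (a - Cb * C₂ * c))]
    _ = b (q + (2 * β) • g) w := by
        simp only [map_add, map_smul, LinearMap.add_apply, LinearMap.smul_apply, smul_eq_mul,
          hqw, hsplit, hgu]

theorem norm_add_smul_le_of_macroelement {δ : ℝ} (hδ : 0 ≤ δ) (hC₂ : 0 ≤ C₂)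
    (hu : ⟪u, w - u⟫ = 0) (hq : ‖q‖ ≤ ‖w - u‖) (hg : ‖g‖ ≤ C₂ * ‖u‖) :
    ‖q + δ • g‖ ≤ (1 + δ * C₂) * ‖w‖ := by
  have hgw : ‖g‖ ≤ C₂ * ‖w‖ :=
    hg.trans (mul_le_mul_of_nonneg_left (norm_le_of_inner_sub_eq_zero hu) hC₂)
  calc ‖q + δ • g‖ ≤ ‖q‖ + δ * ‖g‖ := by
        simpa only [norm_smul, Real.norm_of_nonneg hδ] using norm_add_le q (δ • g)
    _ ≤ ‖w‖ + δ * (C₂ * ‖w‖) := by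
        gcongr; exact hq.trans (norm_sub_le_of_inner_sub_eq_zero hu)
    _ = (1 + δ * C₂) * ‖w‖ := by ring

end Macroelement

/-- Abstract macroelement inf-sup theorem (Stenberg's argument): if `b` is a
bounded bilinear form, `P` is a projection-like map with
`⟪Pw, w − Pw⟫ = 0`, and the local estimate (H1) and global construction (H2)
hold, then `b` satisfies an inf-sup condition: for every `w` there is `z` with
`b(z, w) ≥ (C₁/(1 + C_b² C₂²)) ‖w‖²` and
`‖z‖ ≤ (1 + 2C₁C₂/(1 + C_b² C₂²)) ‖w‖`. -/
theorem abstract_macroelement_infsup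
    {Q W : Type*} [NormedAddCommGroup Q] [NormedSpace ℝ Q]
    [NormedAddCommGroup W] [InnerProductSpace ℝ W]
    (b : Q →ₗ[ℝ] W →ₗ[ℝ] ℝ) (Cb : ℝ) (hCb : 0 < Cb)
    (hb : ∀ (q : Q) (w : W), |b q w| ≤ Cb * ‖q‖ * ‖w‖)
    (P : W →ₗ[ℝ] W) (hP : ∀ w : W, ⟪P w, w - P w⟫ = 0)
    (C₁ C₂ : ℝ) (hC₁ : 0 < C₁) (hC₂ : 0 < C₂)
    (H1 : ∀ w : W, ∃ q : Q, b q w = b q (w - P w) ∧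
      C₁ * ‖w - P w‖ ^ 2 ≤ b q (w - P w) ∧ ‖q‖ ≤ ‖w - P w‖)
    (H2 : ∀ w : W, ∃ g : Q, b g (P w) = ‖P w‖ ^ 2 ∧ ‖g‖ ≤ C₂ * ‖P w‖) :
    ∀ w : W, ∃ z : Q,
      C₁ / (1 + Cb ^ 2 * C₂ ^ 2) * ‖w‖ ^ 2 ≤ b z w ∧
      ‖z‖ ≤ (1 + 2 * C₁ * C₂ / (1 + Cb ^ 2 * C₂ ^ 2)) * ‖w‖ := by
  intro w
  obtain ⟨q, hqw, hq, hq_norm⟩ := H1 w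
  obtain ⟨g, hgP, hg_norm⟩ := H2 w
  set β := C₁ / (1 + Cb ^ 2 * C₂ ^ 2)
  have hβ : 0 ≤ β := by positivity
  have hβC₁ : β * (1 + Cb ^ 2 * C₂ ^ 2) = C₁ := div_mul_cancel₀ C₁ (by positivity)
  refine ⟨q + (2 * β) • g,
    le_apply_add_smul_of_macroelement hCb.le hb hβ hβC₁.le (hP w) hqw hq hgP hg_norm, ?_⟩
  calc ‖q + (2 * β) • g‖ ≤ (1 + 2 * β * C₂) * ‖w‖ :=
        norm_add_smul_le_of_macroelement (by positivity) hC₂.le (hP w) hq_norm hg_norm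
    _ = (1 + 2 * C₁ * C₂ / (1 + Cb ^ 2 * C₂ ^ 2)) * ‖w‖ := by
        simp only [β]; ring
end

section
/- Let r_1, r_2, r_3, r_4 ∈ ℝ² (with r_i = (x_i, y_i)) satisfy det[r_2 − r_1, r_4 − r_1] > 0 and det[r_3 − r_2, r_4 − r_2] > 0, so that T_1 = conv(r_1, r_2, r_4) and T_2 = conv(r_2, r_3, r_4) are two positively oriented nondegenerate triangles sharing the edge r_2 r_4. On each T_i, let β_i := 4 λ^{(i)}_2 λ^{(i)}_4, where λ^{(i)}_2 and λ^{(i)}_4 are the barycentric coordinate functions of T_i associated with the vertices r_2 and r_4. Then for every function w : ℝ² → ℝ: Σ_{i=1}^{2} (|T_i|/3) Σ_{v ∈ vertices(T_i)} ∂_1β_i(v) w(v) = (2/3) (y_1 − y_3) (w(r_2) − w(r_4)), and Σ_{i=1}^{2} (|T_i|/3) Σ_{v ∈ vertices(T_i)} ∂_2β_i(v) w(v) = (2/3) (x_3 − x_1) (w(r_2) − w(r_4)). -/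
open MeasureTheory Pointwise

/-!
At the vertices of its triangle the bubble `4 λₐ λ_b` has gradient `4 ∇λ_b` at `a`, `4 ∇λₐ` at `b`
and `0` at the opposite vertex. By Cramer's rule, twice the oriented area times `∇λ` is the
opposite edge rotated by a quarter turn, so each triangle contributes `2/3` times rotated edges
weighted by `w(r₂)` and `w(r₄)`; on the two triangles these edges add up to the rotated
diagonal `r₁ − r₃`.
-/

-- The factor order makes the orientation hypotheses of the theorem read `0 < cross _ _` by `rfl`.
def cross (u v : ℝ × ℝ) : ℝ := u.1 * v.2 - v.1 * u.2

theorem cross_sub_rotate (p q r : ℝ × ℝ) : cross (q - p) (r - p) = cross (r - q) (p - q) := by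
  simp only [cross, Prod.fst_sub, Prod.snd_sub]; ring

def unitTriangle : Set (ℝ × ℝ) := {p : ℝ × ℝ | 0 ≤ p.1 ∧ 0 ≤ p.2 ∧ p.1 + p.2 ≤ 1}

@[simp]
theorem mem_unitTriangle {p : ℝ × ℝ} : p ∈ unitTriangle ↔ 0 ≤ p.1 ∧ 0 ≤ p.2 ∧ p.1 + p.2 ≤ 1 :=
  Iff.rfl

theorem convexHull_unitTriangle :
    convexHull ℝ {((0 : ℝ), (0 : ℝ)), (1, 0), (0, 1)} = unitTriangle := by
  refine (convexHull_min ?_ ?_).antisymm ?_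
  · rintro p (rfl | rfl | rfl) <;> norm_num
  · rintro x ⟨hx₁, hx₂, hx₃⟩ y ⟨hy₁, hy₂, hy₃⟩ s t hs ht hst
    simp only [mem_unitTriangle, Prod.fst_add, Prod.snd_add, Prod.smul_fst, Prod.smul_snd,
      smul_eq_mul]
    refine ⟨by positivity, by positivity, ?_⟩
    nlinarith
  · rintro ⟨x, y⟩ ⟨hx, hy, hxy⟩
    dsimp only at hx hy hxy
    have hmem := (convex_convexHull ℝ {((0 : ℝ), (0 : ℝ)), (1, 0), (0, 1)}).sum_mem
      (t := Finset.univ) (w := ![1 - x - y, x, y]) (z := ![(0, 0), (1, 0), (0, 1)])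
      (fun i _ => by fin_cases i <;> simp <;> linarith)
      (by simp only [Fin.sum_univ_three, Matrix.cons_val_zero, Matrix.cons_val_one, Matrix.cons_val]
          ring)
      (fun i _ => subset_convexHull ℝ _ (by fin_cases i <;> simp))
    simpa [Fin.sum_univ_three] using hmem

theorem volume_unitTriangle : volume unitTriangle = ENNReal.ofReal (1 / 2) := by
  have hslice (x : ℝ) : volume (Prod.mk x ⁻¹' unitTriangle)
      = (Set.Icc (0 : ℝ) 1).indicator (fun x => ENNReal.ofReal (1 - x)) x := by
    by_cases hx : x ∈ Set.Icc (0 : ℝ) 1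
    · have : Prod.mk x ⁻¹' unitTriangle = Set.Icc 0 (1 - x) := by
        ext y
        simp only [Set.mem_preimage, mem_unitTriangle, Set.mem_Icc]
        constructor
        · rintro ⟨_, h₂, h₃⟩; exact ⟨h₂, by linarith⟩
        · rintro ⟨h₂, h₃⟩; exact ⟨hx.1, h₂, by linarith⟩
      rw [Set.indicator_of_mem hx, this, Real.volume_Icc, sub_zero]
    · have : Prod.mk x ⁻¹' unitTriangle = ∅ := by
        ext y
        simp only [Set.mem_preimage, mem_unitTriangle, Set.mem_empty_iff_false, iff_false]
        rintro ⟨h₁, h₂, h₃⟩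
        exact hx ⟨h₁, by linarith⟩
      rw [Set.indicator_of_notMem hx, this, measure_empty]
  have hmeas : MeasurableSet unitTriangle := by
    unfold unitTriangle
    measurability
  rw [Measure.volume_eq_prod, Measure.prod_apply hmeas]
  simp_rw [hslice]
  rw [lintegral_indicator measurableSet_Icc, ← ofReal_integral_eq_lintegral_ofReal]
  · rw [integral_Icc_eq_integral_Ioc, ← intervalIntegral.integral_of_le zero_le_one]
    rw [intervalIntegral.integral_sub intervalIntegrable_const
      intervalIntegral.intervalIntegrable_id]
    norm_num
  · exact (continuous_const.sub continuous_id).integrableOn_Icc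
  · filter_upwards [ae_restrict_mem measurableSet_Icc] with x hx
    exact sub_nonneg.2 hx.2

theorem volume_convexHull_triangle (p q r : ℝ × ℝ) :
    (volume (convexHull ℝ {p, q, r})).toReal = |cross (q - p) (r - p)| / 2 := by
  set L := Matrix.toLin (Module.Basis.finTwoProd ℝ) (Module.Basis.finTwoProd ℝ)
    !![(q - p).1, (r - p).1; (q - p).2, (r - p).2]
  have hdet : LinearMap.det L = cross (q - p) (r - p) := by
    rw [LinearMap.det_toLin, Matrix.det_fin_two_of, cross]
  have hvertices : ({p, q, r} : Set (ℝ × ℝ)) = p +ᵥ L '' {((0 : ℝ), (0 : ℝ)), (1, 0), (0, 1)} := by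
    have hsub (s : ℝ × ℝ) : ((s.1 - p.1, s.2 - p.2) : ℝ × ℝ) = s - p := rfl
    simp [L, Set.image_insert_eq, Set.vadd_set_insert, Matrix.toLin_finTwoProd_apply, hsub,
      Prod.mk_zero_zero]
  rw [hvertices, convexHull_vadd, ← L.image_convexHull, measure_vadd,
    Measure.addHaar_image_linearMap, hdet, convexHull_unitTriangle, volume_unitTriangle,
    ← ENNReal.ofReal_mul (abs_nonneg _), ENNReal.toReal_ofReal (by positivity)]
  ring

theorem hasFDerivAt_of_eq_affine {ℓ : ℝ × ℝ → ℝ} {a b c : ℝ}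
    (hℓ : ∀ p, ℓ p = a * p.1 + b * p.2 + c) (x : ℝ × ℝ) :
    HasFDerivAt ℓ (a • ContinuousLinearMap.fst ℝ ℝ ℝ + b • ContinuousLinearMap.snd ℝ ℝ ℝ) x := by
  rw [funext hℓ]
  exact ((hasFDerivAt_fst.const_mul a).add (hasFDerivAt_snd.const_mul b)).add_const c

theorem fderiv_apply_of_eq_affine {ℓ : ℝ × ℝ → ℝ} {a b c : ℝ}
    (hℓ : ∀ p, ℓ p = a * p.1 + b * p.2 + c) (x v : ℝ × ℝ) :
    fderiv ℝ ℓ x v = a * v.1 + b * v.2 := by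
  simp [(hasFDerivAt_of_eq_affine hℓ x).fderiv]

theorem cross_mul_fderiv_barycentric {ℓ : ℝ × ℝ → ℝ} {p q r : ℝ × ℝ}
    (hℓ : ∃ a b c : ℝ, ∀ p : ℝ × ℝ, ℓ p = a * p.1 + b * p.2 + c)
    (hp : ℓ p = 1) (hq : ℓ q = 0) (hr : ℓ r = 0) (x v : ℝ × ℝ) :
    cross (q - p) (r - p) * fderiv ℝ ℓ x v = cross v (q - r) := by
  obtain ⟨a, b, c, hℓ⟩ := hℓ
  rw [hℓ] at hp hq hr
  rw [fderiv_apply_of_eq_affine hℓ]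
  simp only [cross, Prod.fst_sub, Prod.snd_sub]
  linear_combination (v.1 * (q.2 - r.2) - v.2 * (q.1 - r.1)) * hp
    + (v.1 * (r.2 - p.2) - v.2 * (r.1 - p.1)) * hq + (v.1 * (p.2 - q.2) - v.2 * (p.1 - q.1)) * hr

theorem fderiv_edgeBubble_apply {E : Type*} [NormedAddCommGroup E] [NormedSpace ℝ E]
    {f g β : E → ℝ} {x : E} (hf : DifferentiableAt ℝ f x) (hg : DifferentiableAt ℝ g x)
    (hβ : ∀ p, β p = 4 * f p * g p) (v : E) :
    fderiv ℝ β x v = 4 * (f x * fderiv ℝ g x v + g x * fderiv ℝ f x v) := by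
  have hfg : DifferentiableAt ℝ (fun p => f p * g p) x := hf.mul hg
  simp [funext hβ, mul_assoc, fderiv_const_mul hfg, fderiv_fun_mul hf hg, mul_add]

theorem cross_mul_edgeBubble_vertexSum {o a b : ℝ × ℝ} {ℓa ℓb β : ℝ × ℝ → ℝ}
    (hℓa : ∃ a b c : ℝ, ∀ p : ℝ × ℝ, ℓa p = a * p.1 + b * p.2 + c)
    (hℓb : ∃ a b c : ℝ, ∀ p : ℝ × ℝ, ℓb p = a * p.1 + b * p.2 + c)
    (ha : ℓa a = 1) (hao : ℓa o = 0) (hab : ℓa b = 0)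
    (hb : ℓb b = 1) (hbo : ℓb o = 0) (hba : ℓb a = 0)
    (hβ : ∀ p, β p = 4 * ℓa p * ℓb p) (v : ℝ × ℝ) (w : ℝ × ℝ → ℝ) :
    cross (a - o) (b - o) *
        (fderiv ℝ β o v * w o + fderiv ℝ β a v * w a + fderiv ℝ β b v * w b) =
      4 * (cross v (o - a) * w a + cross v (b - o) * w b) := by
  have hdiff {ℓ : ℝ × ℝ → ℝ} (hℓ : ∃ a b c : ℝ, ∀ p : ℝ × ℝ, ℓ p = a * p.1 + b * p.2 + c)
      (x : ℝ × ℝ) : DifferentiableAt ℝ ℓ x := by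
    obtain ⟨a, b, c, hℓ⟩ := hℓ
    exact (hasFDerivAt_of_eq_affine hℓ x).differentiableAt
  have hβ' (x : ℝ × ℝ) := fderiv_edgeBubble_apply (hdiff hℓa x) (hdiff hℓb x) hβ v
  have hga : cross (a - o) (b - o) * fderiv ℝ ℓa b v = cross v (b - o) := by
    rw [cross_sub_rotate]; exact cross_mul_fderiv_barycentric hℓa ha hab hao b v
  have hgb : cross (a - o) (b - o) * fderiv ℝ ℓb a v = cross v (o - a) := by
    rw [cross_sub_rotate, cross_sub_rotate]; exact cross_mul_fderiv_barycentric hℓb hb hbo hba a v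
  rw [hβ' o, hβ' a, hβ' b, ha, hao, hab, hb, hbo, hba]
  linear_combination 4 * w a * hgb + 4 * w b * hga

/-- Two-triangle vertex-quadrature identity for the edge bubble of the shared
edge `r₂ r₄`: with `T₁ = conv(r₁, r₂, r₄)`, `T₂ = conv(r₂, r₃, r₄)` positively
oriented, and `βᵢ = 4 λ⁽ⁱ⁾₂ λ⁽ⁱ⁾₄` the edge bubble on `Tᵢ`, for every `w`,
`Σᵢ (|Tᵢ|/3) Σ_v ∂₁βᵢ(v) w(v) = (2/3)(y₁ − y₃)(w(r₂) − w(r₄))` and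
`Σᵢ (|Tᵢ|/3) Σ_v ∂₂βᵢ(v) w(v) = (2/3)(x₃ − x₁)(w(r₂) − w(r₄))`. -/
theorem edge_bubble_vertex_quadrature_two_triangles
    (r₁ r₂ r₃ r₄ : ℝ × ℝ)
    (hor₁ : 0 < (r₂.1 - r₁.1) * (r₄.2 - r₁.2) - (r₄.1 - r₁.1) * (r₂.2 - r₁.2))
    (hor₂ : 0 < (r₃.1 - r₂.1) * (r₄.2 - r₂.2) - (r₄.1 - r₂.1) * (r₃.2 - r₂.2))
    (lamA₁ lamB₁ lamA₂ lamB₂ : ℝ × ℝ → ℝ)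
    (hlamA₁_aff : ∃ a b c : ℝ, ∀ p : ℝ × ℝ, lamA₁ p = a * p.1 + b * p.2 + c)
    (hlamB₁_aff : ∃ a b c : ℝ, ∀ p : ℝ × ℝ, lamB₁ p = a * p.1 + b * p.2 + c)
    (hlamA₂_aff : ∃ a b c : ℝ, ∀ p : ℝ × ℝ, lamA₂ p = a * p.1 + b * p.2 + c)
    (hlamB₂_aff : ∃ a b c : ℝ, ∀ p : ℝ × ℝ, lamB₂ p = a * p.1 + b * p.2 + c)
    (hA₁ : lamA₁ r₂ = 1) (hA₁' : lamA₁ r₁ = 0) (hA₁'' : lamA₁ r₄ = 0)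
    (hB₁ : lamB₁ r₄ = 1) (hB₁' : lamB₁ r₁ = 0) (hB₁'' : lamB₁ r₂ = 0)
    (hA₂ : lamA₂ r₂ = 1) (hA₂' : lamA₂ r₃ = 0) (hA₂'' : lamA₂ r₄ = 0)
    (hB₂ : lamB₂ r₄ = 1) (hB₂' : lamB₂ r₃ = 0) (hB₂'' : lamB₂ r₂ = 0)
    (β₁ β₂ : ℝ × ℝ → ℝ)
    (hβ₁ : ∀ p : ℝ × ℝ, β₁ p = 4 * lamA₁ p * lamB₁ p)
    (hβ₂ : ∀ p : ℝ × ℝ, β₂ p = 4 * lamA₂ p * lamB₂ p)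
    (w : ℝ × ℝ → ℝ) :
    ((volume (convexHull ℝ {r₁, r₂, r₄})).toReal / 3) *
          (fderiv ℝ β₁ r₁ (1, 0) * w r₁ + fderiv ℝ β₁ r₂ (1, 0) * w r₂ +
            fderiv ℝ β₁ r₄ (1, 0) * w r₄) +
        ((volume (convexHull ℝ {r₂, r₃, r₄})).toReal / 3) *
          (fderiv ℝ β₂ r₂ (1, 0) * w r₂ + fderiv ℝ β₂ r₃ (1, 0) * w r₃ +
            fderiv ℝ β₂ r₄ (1, 0) * w r₄) =
      (2 / 3) * (r₁.2 - r₃.2) * (w r₂ - w r₄) ∧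
    ((volume (convexHull ℝ {r₁, r₂, r₄})).toReal / 3) *
          (fderiv ℝ β₁ r₁ (0, 1) * w r₁ + fderiv ℝ β₁ r₂ (0, 1) * w r₂ +
            fderiv ℝ β₁ r₄ (0, 1) * w r₄) +
        ((volume (convexHull ℝ {r₂, r₃, r₄})).toReal / 3) *
          (fderiv ℝ β₂ r₂ (0, 1) * w r₂ + fderiv ℝ β₂ r₃ (0, 1) * w r₃ +
            fderiv ℝ β₂ r₄ (0, 1) * w r₄) =
      (2 / 3) * (r₃.1 - r₁.1) * (w r₂ - w r₄) := by
  have hT₁ : (volume (convexHull ℝ {r₁, r₂, r₄})).toReal = cross (r₂ - r₁) (r₄ - r₁) / 2 := by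
    rw [volume_convexHull_triangle, abs_of_pos (show 0 < cross (r₂ - r₁) (r₄ - r₁) from hor₁)]
  -- in the vertex order `(r₃, r₂, r₄)` used for `T₂`, it is negatively oriented
  have hT₂ : (volume (convexHull ℝ {r₂, r₃, r₄})).toReal = -cross (r₂ - r₃) (r₄ - r₃) / 2 := by
    rw [volume_convexHull_triangle, abs_of_pos (show 0 < cross (r₃ - r₂) (r₄ - r₂) from hor₂),
      cross, cross]
    simp only [Prod.fst_sub, Prod.snd_sub]
    ring
  have h₁ (v : ℝ × ℝ) := cross_mul_edgeBubble_vertexSum hlamA₁_aff hlamB₁_aff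
    hA₁ hA₁' hA₁'' hB₁ hB₁' hB₁'' hβ₁ v w
  have h₂ (v : ℝ × ℝ) := cross_mul_edgeBubble_vertexSum hlamA₂_aff hlamB₂_aff
    hA₂ hA₂' hA₂'' hB₂ hB₂' hB₂'' hβ₂ v w
  rw [hT₁, hT₂]
  constructor
  · linear_combination (norm := (simp only [cross, Prod.fst_sub, Prod.snd_sub]; ring))
      h₁ (1, 0) / 6 - h₂ (1, 0) / 6
  · linear_combination (norm := (simp only [cross, Prod.fst_sub, Prod.snd_sub]; ring))
      h₁ (0, 1) / 6 - h₂ (0, 1) / 6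
end

section
/- Let r_1, r_2, r_3, r_4 ∈ ℝ² (with r_i = (x_i, y_i)) satisfy det[r_2 − r_1, r_4 − r_1] > 0 and det[r_3 − r_2, r_4 − r_2] > 0, and define T_1 = conv(r_1, r_2, r_4), T_2 = conv(r_2, r_3, r_4) and β_i = 4 λ^{(i)}_2 λ^{(i)}_4 as the edge-bubble of the shared edge r_2 r_4 on T_i (λ^{(i)}_2, λ^{(i)}_4 being the barycentric coordinates of T_i at r_2 and r_4). Let w : ℝ² → ℝ. If both vertex-quadrature sums vanish, i.e., Σ_{i=1}^{2} (|T_i|/3) Σ_{v ∈ vertices(T_i)} ∂_1β_i(v) w(v) = 0 and Σ_{i=1}^{2} (|T_i|/3) Σ_{v ∈ vertices(T_i)} ∂_2β_i(v) w(v) = 0, then w(r_2) = w(r_4). (Note that the two orientation hypotheses force r_1 ≠ r_3, so x_1 − x_3 and y_1 − y_3 cannot both be zero.) -/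
/-!
On a positively oriented triangle `(o, a, b)` the edge bubble `β = 4 λ_a λ_b` of the edge `ab`
has `∇β(o) = 0`, `∇β(a) = 4 ∇λ_b` and `∇β(b) = 4 ∇λ_a`, while Cramer's rule gives
`2 |T| ∇λ_a = (b - o)^⊥` and `2 |T| ∇λ_b = -(a - o)^⊥`. Hence the vertex-quadrature form
`(∂_d β, w)_{Q,T}` equals `⅔ (w(a) (a - o) × d + w(b) d × (b - o))`. Adding the contributions of
`T₁ = (r₁, r₂, r₄)` and of `T₂ = (r₃, r₄, r₂)`, the terms involving the shared edge cancel and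
what is left is `⅔ (w(r₂) - w(r₄)) (r₃ - r₁) × d`. Both orientation conditions together rule out
`r₁ = r₃`, so testing with `d = e₁, e₂` forces `w(r₂) = w(r₄)`.
-/

open MeasureTheory Pointwise

def pairLinearMap (u v : ℝ × ℝ) : ℝ × ℝ →ₗ[ℝ] ℝ × ℝ :=
  (LinearMap.fst ℝ ℝ ℝ).smulRight u + (LinearMap.snd ℝ ℝ ℝ).smulRight v

theorem det_pairLinearMap (u v : ℝ × ℝ) : LinearMap.det (pairLinearMap u v) = cross u v := by
  rw [← LinearMap.det_toMatrix (Module.Basis.finTwoProd ℝ), Matrix.det_fin_two]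
  simp [LinearMap.toMatrix_apply, pairLinearMap, cross]

theorem convexHull_unitTriangle_s17 :
    convexHull ℝ {(0, 0), (1, 0), (0, 1)} = {p : ℝ × ℝ | 0 ≤ p.1 ∧ 0 ≤ p.2 ∧ p.1 + p.2 ≤ 1} := by
  apply Set.Subset.antisymm
  · refine convexHull_min ?_ ?_
    · rintro p (rfl | rfl | rfl) <;> norm_num
    · rintro p ⟨hp₁, hp₂, hp⟩ q ⟨hq₁, hq₂, hq⟩ s t hs ht hst
      simp only [Set.mem_ofPred_eq, Prod.fst_add, Prod.snd_add, Prod.smul_fst, Prod.smul_snd,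
        smul_eq_mul]
      exact ⟨by positivity, by positivity, by nlinarith⟩
  · rintro ⟨x, y⟩ ⟨hx, hy, hxy⟩
    have hw : 1 - x - y + x + y = 1 := by ring
    simpa [Finset.centerMass, Fin.sum_univ_three, hw] using
      Finset.centerMass_mem_convexHull (Finset.univ : Finset (Fin 3))
        (s := {(0, 0), (1, 0), (0, 1)}) (w := ![1 - x - y, x, y])
        (z := ![((0 : ℝ), (0 : ℝ)), (1, 0), (0, 1)])
        (by intro i _; fin_cases i <;> simp <;> linarith)
        (by simp [Fin.sum_univ_three, hw]) (by intro i _; fin_cases i <;> simp)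

theorem volume_unitTriangle_s17 :
    volume {p : ℝ × ℝ | 0 ≤ p.1 ∧ 0 ≤ p.2 ∧ p.1 + p.2 ≤ 1} = ENNReal.ofReal (1 / 2) := by
  have hmeas : MeasurableSet {p : ℝ × ℝ | 0 ≤ p.1 ∧ 0 ≤ p.2 ∧ p.1 + p.2 ≤ 1} :=
    (isClosed_le continuous_const continuous_fst).inter
      ((isClosed_le continuous_const continuous_snd).inter
        (isClosed_le (continuous_fst.add continuous_snd) continuous_const)) |>.measurableSet
  have hslice (x : ℝ) : volume (Prod.mk x ⁻¹' {p : ℝ × ℝ | 0 ≤ p.1 ∧ 0 ≤ p.2 ∧ p.1 + p.2 ≤ 1})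
      = (Set.Icc 0 1).indicator (fun x => ENNReal.ofReal (1 - x)) x := by
    by_cases hx : x ∈ Set.Icc 0 1
    · rw [Set.indicator_of_mem hx, ← sub_zero (1 - x), ← Real.volume_Icc]
      congr 1; ext y
      simp only [Set.mem_preimage, Set.mem_ofPred_eq, Set.mem_Icc, hx.1, true_and]
      constructor <;> rintro ⟨h, h'⟩ <;> exact ⟨h, by linarith⟩
    · rw [Set.indicator_of_notMem hx]
      exact measure_mono_null (fun y hy => hx ⟨hy.1, by linarith [hy.2.1, hy.2.2]⟩) measure_empty
  rw [Measure.volume_eq_prod, Measure.prod_apply hmeas]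
  simp only [hslice]
  rw [lintegral_indicator measurableSet_Icc, ← ofReal_integral_eq_lintegral_ofReal]
  · rw [integral_Icc_eq_integral_Ioc, ← intervalIntegral.integral_of_le zero_le_one,
      intervalIntegral.integral_sub intervalIntegrable_const intervalIntegral.intervalIntegrable_id]
    norm_num
  · exact (continuous_const.sub continuous_id).integrableOn_Icc
  · exact Filter.eventually_of_mem (ae_restrict_mem measurableSet_Icc) fun x hx => by
      simpa using hx.2

theorem convexHull_triple_eq_vadd_image (o a b : ℝ × ℝ) :
    convexHull ℝ {o, a, b} =
      o +ᵥ pairLinearMap (a - o) (b - o) '' convexHull ℝ {(0, 0), (1, 0), (0, 1)} := by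
  rw [← Set.image_vadd, ← Set.image_comp]
  refine Eq.trans ?_ (((AffineEquiv.constVAdd ℝ (ℝ × ℝ) o).toAffineMap.comp
    (pairLinearMap (a - o) (b - o)).toAffineMap).image_convexHull _).symm
  simp [Set.image_insert_eq, pairLinearMap]

theorem volume_convexHull_triple (o a b : ℝ × ℝ) :
    volume (convexHull ℝ {o, a, b}) = ENNReal.ofReal (|cross (a - o) (b - o)| / 2) := by
  rw [convexHull_triple_eq_vadd_image, measure_vadd, Measure.addHaar_image_linearMap,
    det_pairLinearMap, convexHull_unitTriangle_s17, volume_unitTriangle_s17,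
    ← ENNReal.ofReal_mul (abs_nonneg _), mul_one_div]

noncomputable def vertexQuadrature (p q r : ℝ × ℝ) (g : ℝ × ℝ → ℝ) : ℝ :=
  (volume (convexHull ℝ {p, q, r})).toReal / 3 * (g p + g q + g r)

theorem vertexQuadrature_rotate (p q r : ℝ × ℝ) (g : ℝ × ℝ → ℝ) :
    vertexQuadrature p q r g = vertexQuadrature q r p g := by
  unfold vertexQuadrature
  rw [Set.insert_comm p q, Set.pair_comm p r]
  ring

theorem hasFDerivAt_of_affine {f : ℝ × ℝ → ℝ} {a b c : ℝ}
    (hf : ∀ p, f p = a * p.1 + b * p.2 + c) (x : ℝ × ℝ) :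
    HasFDerivAt f (a • ContinuousLinearMap.fst ℝ ℝ ℝ + b • ContinuousLinearMap.snd ℝ ℝ ℝ) x := by
  rw [funext hf]
  exact ((hasFDerivAt_fst.const_mul a).add (hasFDerivAt_snd.const_mul b)).add_const c

theorem fderiv_const_mul_mul_apply {E : Type*} [NormedAddCommGroup E] [NormedSpace ℝ E]
    {f g : E → ℝ} {f' g' : E →L[ℝ] ℝ} {x : E} (hf : HasFDerivAt f f' x)
    (hg : HasFDerivAt g g' x) (c : ℝ) (d : E) :
    fderiv ℝ (fun p => c * f p * g p) x d = c * (f' d * g x + f x * g' d) := by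
  have h : HasFDerivAt (fun p => c * f p * g p) _ x := (hf.const_mul c).mul hg
  rw [h.fderiv]
  simp only [add_apply, smul_apply, smul_eq_mul]
  ring

-- Cramer's rule for the gradient `(a, b)` of an affine function.
theorem cross_mul_slope_of_affine {f : ℝ × ℝ → ℝ} {a b c : ℝ}
    (hf : ∀ p, f p = a * p.1 + b * p.2 + c) (o p q d : ℝ × ℝ) :
    cross (p - o) (q - o) * (a * d.1 + b * d.2) =
      (f p - f o) * cross d (q - o) + (f q - f o) * cross (p - o) d := by
  simp only [hf, cross, Prod.fst_sub, Prod.snd_sub]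
  ring

theorem vertexQuadrature_fderiv_edgeBubble {o a b : ℝ × ℝ} (hT : 0 < cross (a - o) (b - o))
    {la lb : ℝ × ℝ → ℝ}
    (hla : ∃ α β γ : ℝ, ∀ p : ℝ × ℝ, la p = α * p.1 + β * p.2 + γ)
    (hlb : ∃ α β γ : ℝ, ∀ p : ℝ × ℝ, lb p = α * p.1 + β * p.2 + γ)
    (hla_o : la o = 0) (hla_a : la a = 1) (hla_b : la b = 0)
    (hlb_o : lb o = 0) (hlb_a : lb a = 0) (hlb_b : lb b = 1) (w : ℝ × ℝ → ℝ) (d : ℝ × ℝ) :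
    vertexQuadrature o a b (fun v => fderiv ℝ (fun p => 4 * la p * lb p) v d * w v) =
      2 / 3 * (w a * cross (a - o) d + w b * cross d (b - o)) := by
  obtain ⟨α, β, γ, hla⟩ := hla
  obtain ⟨α', β', γ', hlb⟩ := hlb
  have hderiv (v : ℝ × ℝ) := fderiv_const_mul_mul_apply (hasFDerivAt_of_affine hla v)
    (hasFDerivAt_of_affine hlb v) 4 d
  have hgrad_a := cross_mul_slope_of_affine hla o a b d
  have hgrad_b := cross_mul_slope_of_affine hlb o a b d
  unfold vertexQuadrature
  beta_reduce
  rw [volume_convexHull_triple, abs_of_pos hT, ENNReal.toReal_ofReal (by positivity),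
    hderiv o, hderiv a, hderiv b]
  simp only [hla_o, hla_a, hla_b, hlb_o, hlb_a, hlb_b, add_apply,
    smul_apply, ContinuousLinearMap.coe_fst', ContinuousLinearMap.coe_snd',
    smul_eq_mul] at hgrad_a hgrad_b ⊢
  linear_combination 2 / 3 * (w a * hgrad_b + w b * hgrad_a)

/-- Key step of the macroelement condition (M1): with `T₁ = conv(r₁, r₂, r₄)`,
`T₂ = conv(r₂, r₃, r₄)` positively oriented triangles sharing the edge `r₂ r₄`
and `βᵢ` the edge bubble of that edge on `Tᵢ`, if both vertex-quadrature
divergence sums vanish, then `w(r₂) = w(r₄)`. -/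
theorem vertex_quadrature_kernel_forces_equal_values
    (r₁ r₂ r₃ r₄ : ℝ × ℝ)
    (hor₁ : 0 < (r₂.1 - r₁.1) * (r₄.2 - r₁.2) - (r₄.1 - r₁.1) * (r₂.2 - r₁.2))
    (hor₂ : 0 < (r₃.1 - r₂.1) * (r₄.2 - r₂.2) - (r₄.1 - r₂.1) * (r₃.2 - r₂.2))
    (lamA₁ lamB₁ lamA₂ lamB₂ : ℝ × ℝ → ℝ)
    (hlamA₁_aff : ∃ a b c : ℝ, ∀ p : ℝ × ℝ, lamA₁ p = a * p.1 + b * p.2 + c)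
    (hlamB₁_aff : ∃ a b c : ℝ, ∀ p : ℝ × ℝ, lamB₁ p = a * p.1 + b * p.2 + c)
    (hlamA₂_aff : ∃ a b c : ℝ, ∀ p : ℝ × ℝ, lamA₂ p = a * p.1 + b * p.2 + c)
    (hlamB₂_aff : ∃ a b c : ℝ, ∀ p : ℝ × ℝ, lamB₂ p = a * p.1 + b * p.2 + c)
    (hA₁ : lamA₁ r₂ = 1) (hA₁' : lamA₁ r₁ = 0) (hA₁'' : lamA₁ r₄ = 0)
    (hB₁ : lamB₁ r₄ = 1) (hB₁' : lamB₁ r₁ = 0) (hB₁'' : lamB₁ r₂ = 0)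
    (hA₂ : lamA₂ r₂ = 1) (hA₂' : lamA₂ r₃ = 0) (hA₂'' : lamA₂ r₄ = 0)
    (hB₂ : lamB₂ r₄ = 1) (hB₂' : lamB₂ r₃ = 0) (hB₂'' : lamB₂ r₂ = 0)
    (β₁ β₂ : ℝ × ℝ → ℝ)
    (hβ₁ : ∀ p : ℝ × ℝ, β₁ p = 4 * lamA₁ p * lamB₁ p)
    (hβ₂ : ∀ p : ℝ × ℝ, β₂ p = 4 * lamA₂ p * lamB₂ p)
    (w : ℝ × ℝ → ℝ)
    (hsum₁ : ((volume (convexHull ℝ {r₁, r₂, r₄})).toReal / 3) *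
          (fderiv ℝ β₁ r₁ (1, 0) * w r₁ + fderiv ℝ β₁ r₂ (1, 0) * w r₂ +
            fderiv ℝ β₁ r₄ (1, 0) * w r₄) +
        ((volume (convexHull ℝ {r₂, r₃, r₄})).toReal / 3) *
          (fderiv ℝ β₂ r₂ (1, 0) * w r₂ + fderiv ℝ β₂ r₃ (1, 0) * w r₃ +
            fderiv ℝ β₂ r₄ (1, 0) * w r₄) = 0)
    (hsum₂ : ((volume (convexHull ℝ {r₁, r₂, r₄})).toReal / 3) *
          (fderiv ℝ β₁ r₁ (0, 1) * w r₁ + fderiv ℝ β₁ r₂ (0, 1) * w r₂ +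
            fderiv ℝ β₁ r₄ (0, 1) * w r₄) +
        ((volume (convexHull ℝ {r₂, r₃, r₄})).toReal / 3) *
          (fderiv ℝ β₂ r₂ (0, 1) * w r₂ + fderiv ℝ β₂ r₃ (0, 1) * w r₃ +
            fderiv ℝ β₂ r₄ (0, 1) * w r₄) = 0) :
    w r₂ = w r₄ := by
  have hT₂ : 0 < cross (r₄ - r₃) (r₂ - r₃) := by
    convert hor₂ using 1
    simp only [cross, Prod.fst_sub, Prod.snd_sub]
    ring
  have hsum (d : ℝ × ℝ) :
      vertexQuadrature r₁ r₂ r₄ (fun v => fderiv ℝ β₁ v d * w v) +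
          vertexQuadrature r₂ r₃ r₄ (fun v => fderiv ℝ β₂ v d * w v) =
        2 / 3 * (w r₂ - w r₄) * cross (r₃ - r₁) d := by
    rw [vertexQuadrature_rotate r₂, funext hβ₁,
      funext fun p => (hβ₂ p).trans (mul_right_comm _ _ _),
      vertexQuadrature_fderiv_edgeBubble hor₁ hlamA₁_aff hlamB₁_aff hA₁' hA₁ hA₁'' hB₁' hB₁'' hB₁,
      vertexQuadrature_fderiv_edgeBubble hT₂ hlamB₂_aff hlamA₂_aff hB₂' hB₂ hB₂'' hA₂' hA₂'' hA₂]
    simp only [cross, Prod.fst_sub, Prod.snd_sub]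
    ring
  have h₁ : w r₂ = w r₄ ∨ r₁.2 = r₃.2 := by
    simpa [cross, sub_eq_zero] using (hsum (1, 0)).symm.trans hsum₁
  have h₂ : w r₂ = w r₄ ∨ r₃.1 = r₁.1 := by
    simpa [cross, sub_eq_zero] using (hsum (0, 1)).symm.trans hsum₂
  have hr : r₁ ≠ r₃ := by
    rintro rfl
    nlinarith
  by_contra hw
  exact hr (Prod.ext (h₂.resolve_left hw).symm (h₁.resolve_left hw))
end
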